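/- Let I be a Borel-fixed monomial ideal in R = k[x_1,...,x_n] and s, t ≥ 1 integers such that dim_k (R/I)_t < C(s+t, t). Then every monomial of degree t in the variables x_1,...,x_{n-s} belongs to I; consequently the ideal (I, x_{n-s+1},...,x_n) contains all monomials of degree t, i.e., x_{n-s+1},...,x_n generate a reduction of R/I with reduction number at most t−1. -/

import Mathlib

open MvPolynomial

noncomputable section

/-- The total degree of a monomial exponent vector. -/
def monDeg {n : ℕ} (A : Fin n →₀ ℕ) : ℕ := A.sum fun _ e => e

/-- `BorelSpec A B` : the monomial `x^B` is a Borel specialization of `x^A`,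
i.e. `x^B` is obtained from `x^A` by replacing every variable `x_i` of `x^A`
by a variable `x_{f i}` with `f i ≤ i`. -/
def BorelSpec {n : ℕ} (A B : Fin n →₀ ℕ) : Prop :=
  ∃ f : Fin n → Fin n, (∀ i, f i ≤ i) ∧ B = A.mapDomain f

/-- `borelPSet A` : the set of (exponent vectors of) monomials that can be
Borel-specialized to `x^A`. -/
def borelPSet {n : ℕ} (A : Fin n →₀ ℕ) : Set (Fin n →₀ ℕ) := {C | BorelSpec C A}

/-- A monomial ideal: an ideal generated by monomials. -/
def IsMonomialIdeal {k : Type*} [Field k] {n : ℕ} (I : Ideal (MvPolynomial (Fin n) k)) : Prop :=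
  ∃ S : Set (Fin n →₀ ℕ), I = Ideal.span ((fun A => (monomial A (1 : k))) '' S)

/-- Borel-fixed: `I` is fixed by every invertible linear substitution sending each
variable `x_i` to a linear combination of the variables `x_j` with `j ≤ i`
(the Borel group of upper triangular invertible matrices). -/
def IsBorelFixed {k : Type*} [Field k] {n : ℕ} (I : Ideal (MvPolynomial (Fin n) k)) : Prop :=
  ∀ g : Matrix (Fin n) (Fin n) k, IsUnit g.det → (∀ i j : Fin n, i < j → g i j = 0) →
    I.map (aeval (fun i => ∑ j, MvPolynomial.C (g i j) * X j) :
      MvPolynomial (Fin n) k →ₐ[k] MvPolynomial (Fin n) k) = I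

/-- The Hilbert function `t ↦ dim_k (R/I)_t`. -/
def hilb {k : Type*} [Field k] {n : ℕ} (I : Ideal (MvPolynomial (Fin n) k)) (t : ℕ) : ℕ :=
  Module.finrank k
    ((homogeneousSubmodule (Fin n) k t).map (Ideal.Quotient.mkₐ k I).toLinearMap)

/-- `Q` generates a reduction of `R/I` : `(Q + I)_t = R_t` for all large `t`. -/
def IsReductionOf {k : Type*} [Field k] {n : ℕ} (Q I : Ideal (MvPolynomial (Fin n) k)) : Prop :=
  ∃ N : ℕ, ∀ t ≥ N, ∀ p : MvPolynomial (Fin n) k, p.IsHomogeneous t → p ∈ Q ⊔ I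

/-- The reduction number `r_Q(R/I)` : the least `r` such that
`(Q + I)_t = R_t` for all `t > r`. -/
def redNum {k : Type*} [Field k] {n : ℕ} (Q I : Ideal (MvPolynomial (Fin n) k)) : ℕ :=
  sInf {r : ℕ | ∀ t > r, ∀ p : MvPolynomial (Fin n) k, p.IsHomogeneous t → p ∈ Q ⊔ I}

/-- `Q` is an `s`-reduction of `R/I` : it is generated by `s` linear forms and is a
reduction of `R/I`. -/
def IsSReduction {k : Type*} [Field k] {n : ℕ} (s : ℕ)
    (Q I : Ideal (MvPolynomial (Fin n) k)) : Prop :=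
  (∃ z : Fin s → MvPolynomial (Fin n) k,
      (∀ i, (z i).IsHomogeneous 1) ∧ Q = Ideal.span (Set.range z)) ∧
  IsReductionOf Q I

/-- The `s`-reduction number `r_s(R/I)` : the minimum of `r_Q(R/I)` over all
`s`-reductions `Q` of `R/I`. -/
def sRedNum {k : Type*} [Field k] {n : ℕ} (s : ℕ) (I : Ideal (MvPolynomial (Fin n) k)) : ℕ :=
  sInf {r : ℕ | ∃ Q, IsSReduction s Q I ∧ redNum Q I = r}

/-- Strong stability condition on a monomial ideal: if `x^A ∈ I` is divisible by `x_i`,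
then `x^A x_j / x_i ∈ I` for all `j ≤ i`. -/
def StronglyStable {k : Type*} [Field k] {n : ℕ} (I : Ideal (MvPolynomial (Fin n) k)) : Prop :=
  ∀ (A : Fin n →₀ ℕ) (i j : Fin n), monomial A (1 : k) ∈ I → A i ≠ 0 → j ≤ i →
    monomial (A - Finsupp.single i 1 + Finsupp.single j 1) (1 : k) ∈ I

/-- Lex-segment condition: if `x^A ∈ I` and `x^B ≥ x^A` in the lexicographic order
(with `x_1 > x_2 > ⋯ > x_n`) and `deg x^B = deg x^A`, then `x^B ∈ I`. -/
def IsLexSegment {k : Type*} [Field k] {n : ℕ} (I : Ideal (MvPolynomial (Fin n) k)) : Prop :=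
  ∀ A B : Fin n →₀ ℕ, monomial A (1 : k) ∈ I → monDeg B = monDeg A →
    Finsupp.Lex (· < ·) (· < ·) A B → monomial B (1 : k) ∈ I

/-- A homogeneous ideal: closed under taking homogeneous components. -/
def IsHomogeneousIdeal {k : Type*} [Field k] {n : ℕ} (I : Ideal (MvPolynomial (Fin n) k)) : Prop :=
  ∀ p ∈ I, ∀ t : ℕ, homogeneousComponent t p ∈ I

/-- The ideal generated by the last `s` variables `x_{n-s+1}, …, x_n`. -/
def lastVars (k : Type*) [Field k] (n s : ℕ) : Ideal (MvPolynomial (Fin n) k) :=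
  Ideal.span ((fun i => (X i : MvPolynomial (Fin n) k)) '' {i : Fin n | n - s ≤ (i : ℕ)})

/-!
Suppose a monomial `x^A` of degree `t` in `x_1, …, x_{n-s}` is not in `I`. A Borel-fixed monomial
ideal is closed under Borel specialization `x^C ↦ x^{f(C)}`: the substitution `x_i ↦ x_i + x_{f i}`
lies in the Borel group, and for lex with `x_1 > x_2 > ⋯` it sends `x^C` to a polynomial with
leading term `x^{f(C)}`, which a monomial ideal must then contain. Hence no monomial specializing
to `x^A` lies in `I`.

Writing `x^A = x_{a_1} ⋯ x_{a_t}` with `a_1 ≤ ⋯ ≤ a_t`, the monomials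
`x_{a_1 + v_1} ⋯ x_{a_t + v_t}` with `0 ≤ v_1 ≤ ⋯ ≤ v_t ≤ s` are `C(s+t, t)` distinct such
monomials (the map `a_j + v_j ↦ a_j` is well defined because both sequences are monotone), and
since `I` is monomial they stay linearly independent in `(R/I)_t`, contradicting
`dim_k (R/I)_t < C(s+t, t)`. Then every monomial of degree at least `t` is divisible either by
one of `x_{n-s+1}, …, x_n` or by a monomial of degree `t` in the remaining variables.
-/

theorem Multiset.exists_monotone_ofFn {α : Type*} [LinearOrder α] {t : ℕ} (m : Multiset α)
    (hm : Multiset.card m = t) : ∃ a : Fin t → α, Monotone a ∧ (List.ofFn a : Multiset α) = m := by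
  obtain ⟨l, hl, rfl⟩ : ∃ l : List α, l.SortedLE ∧ (l : Multiset α) = m :=
    ⟨m.sort (· ≤ ·), (Multiset.pairwise_sort _ _).sortedLE, Multiset.sort_eq _ _⟩
  rw [Multiset.coe_card] at hm
  subst hm
  exact ⟨l.get, hl.monotone_get, by rw [List.ofFn_get]⟩

theorem Monotone.eq_of_coe_ofFn_eq {α : Type*} [LinearOrder α] {t : ℕ} {a b : Fin t → α}
    (ha : Monotone a) (hb : Monotone b)
    (h : (List.ofFn a : Multiset α) = List.ofFn b) : a = b :=
  List.ofFn_injective ((Multiset.coe_eq_coe.mp h).eq_of_sortedLE ha.sortedLE_ofFn hb.sortedLE_ofFn)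

theorem Monotone.eq_of_add_eq_add {ι : Type*} [LinearOrder ι] {p v : ι → ℕ} (hp : Monotone p)
    (hv : Monotone v) {i j : ι} (h : p i + v i = p j + v j) : p i = p j := by
  rcases le_total i j with hij | hij
  · have := hp hij; have := hv hij; omega
  · have := hp hij; have := hv hij; omega

theorem exists_specialization_comp_eq {n t : ℕ} {a c : Fin t → Fin n} {v : Fin t → ℕ}
    (ha : Monotone a) (hv : Monotone v) (hc : ∀ j, (c j : ℕ) = a j + v j) :
    ∃ f : Fin n → Fin n, (∀ i, f i ≤ i) ∧ f ∘ c = a := by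
  classical
  refine ⟨fun i => if h : ∃ j, c j = i then a h.choose else i, fun i => ?_, funext fun j => ?_⟩
  · dsimp only
    split_ifs with h
    · have := hc h.choose
      rw [h.choose_spec] at this
      exact Fin.le_def.mpr (by omega)
    · exact le_rfl
  · have h : ∃ j', c j' = c j := ⟨j, rfl⟩
    simp only [Function.comp_apply, dif_pos h]
    have hcj := congrArg Fin.val h.choose_spec
    rw [hc, hc] at hcj
    exact Fin.ext
      (Monotone.eq_of_add_eq_add (p := fun j => (a j : ℕ)) (fun _ _ hij => ha hij) hv hcj)

theorem monDeg_eq_card_toMultiset {n : ℕ} (A : Fin n →₀ ℕ) :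
    monDeg A = Multiset.card (Finsupp.toMultiset A) :=
  (Finsupp.card_toMultiset A).symm

theorem exists_injective_borelSpec {n s t : ℕ} (A : Fin n →₀ ℕ) (hA : monDeg A = t)
    (hsupp : ∀ i ∈ A.support, (i : ℕ) < n - s) :
    ∃ C : Sym (Fin (s + 1)) t → (Fin n →₀ ℕ),
      Function.Injective C ∧ ∀ M, monDeg (C M) = t ∧ BorelSpec (C M) A := by
  classical
  obtain ⟨a, ha, haA⟩ := (Finsupp.toMultiset A).exists_monotone_ofFn
    (by rw [← monDeg_eq_card_toMultiset, hA])
  have ha_lt : ∀ j, (a j : ℕ) < n - s := fun j =>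
    hsupp _ (by rw [← Finsupp.mem_toMultiset, ← haA]; simp [List.mem_ofFn])
  choose v hv hvM using fun M : Sym (Fin (s + 1)) t => M.1.exists_monotone_ofFn M.2
  let c : Sym (Fin (s + 1)) t → Fin t → Fin n := fun M j =>
    ⟨a j + v M j, by have := ha_lt j; have := (v M j).isLt; omega⟩
  have hc : ∀ M, Monotone (c M) := fun M _ _ hij =>
    Fin.le_def.mpr (Nat.add_le_add (ha hij) (hv M hij))
  refine ⟨fun M => Multiset.toFinsupp (List.ofFn (c M)), fun M M' hMM' => ?_, fun M => ⟨?_, ?_⟩⟩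
  · have hcc := (hc M).eq_of_coe_ofFn_eq (hc M') (Multiset.toFinsupp.injective hMM')
    have hvv : v M = v M' := funext fun j => Fin.ext (by
      have := congrArg Fin.val (congrFun hcc j)
      simp only [c] at this
      omega)
    exact Subtype.ext (by rw [← hvM M, ← hvM M', hvv])
  · simp [monDeg_eq_card_toMultiset]
  · obtain ⟨f, hf, hfc⟩ := exists_specialization_comp_eq ha (fun _ _ hij => hv M hij)
      (c := c M) (fun j => rfl)
    refine ⟨f, hf, Multiset.toFinsupp.symm.injective ?_⟩
    simp only [Multiset.toFinsupp_symm_apply, ← Finsupp.toMultiset_map,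
      Multiset.toFinsupp_toMultiset, Multiset.map_coe, List.map_ofFn, hfc, haA]

section

variable {k : Type*} [Field k] {n : ℕ}

theorem IsMonomialIdeal.monomial_mem_of_mem_support {I : Ideal (MvPolynomial (Fin n) k)}
    (hI : IsMonomialIdeal I) {p : MvPolynomial (Fin n) k} (hp : p ∈ I) {D : Fin n →₀ ℕ}
    (hD : D ∈ p.support) : monomial D (1 : k) ∈ I := by
  obtain ⟨S, rfl⟩ := hI
  obtain ⟨E, hE, hED⟩ := mem_ideal_span_monomial_image.mp hp D hD
  refine mem_ideal_span_monomial_image.mpr fun D' hD' => ⟨E, hE, ?_⟩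
  rwa [Finset.mem_singleton.mp (support_monomial_subset hD')]

/-- The image of `x_i` under the Borel substitution `x_i ↦ x_i + x_{f i}`. The summand `x_{f i}` is
omitted when `f i = i`: doubling `x_i` would kill it in characteristic `2`. -/
def specializationForm (k : Type*) [Field k] (f : Fin n → Fin n) (i : Fin n) :
    MvPolynomial (Fin n) k :=
  X i + if f i < i then X (f i) else 0

def specializationMatrix (k : Type*) [Field k] (f : Fin n → Fin n) : Matrix (Fin n) (Fin n) k :=
  1 + Matrix.of fun i j => if j = f i ∧ f i < i then 1 else 0

variable {f : Fin n → Fin n}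

theorem specializationMatrix_eq_zero_of_lt (hf : ∀ i, f i ≤ i) {i j : Fin n} (hij : i < j) :
    specializationMatrix k f i j = 0 := by
  have : ¬(j = f i ∧ f i < i) := fun h => ((hf i).trans_lt hij).ne h.1.symm
  simp [specializationMatrix, Matrix.one_apply_ne hij.ne, this]

theorem det_specializationMatrix (hf : ∀ i, f i ≤ i) : (specializationMatrix k f).det = 1 := by
  rw [Matrix.det_of_isLowerTriangular _ fun i j hij => specializationMatrix_eq_zero_of_lt hf hij]
  exact Finset.prod_eq_one fun i _ => by simpa [specializationMatrix] using Eq.le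

theorem sum_specializationMatrix_mul_X (i : Fin n) :
    ∑ j, C (specializationMatrix k f i j) * X j = specializationForm k f i := by
  by_cases hfi : f i < i <;>
    simp [specializationMatrix, specializationForm, add_mul, Finset.sum_add_distrib,
      Matrix.one_apply, hfi]

theorem lex_degree_specializationForm (hf : ∀ i, f i ≤ i) (i : Fin n) :
    MonomialOrder.lex.degree (specializationForm k f i) = Finsupp.single (f i) 1 ∧
    MonomialOrder.lex.Monic (specializationForm k f i) := by
  rw [specializationForm]
  split_ifs with hfi
  · have hlt : MonomialOrder.lex.toSyn (MonomialOrder.lex.degree (X i : MvPolynomial (Fin n) k)) <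
        MonomialOrder.lex.toSyn (MonomialOrder.lex.degree (X (f i) : MvPolynomial (Fin n) k)) := by
      rw [MonomialOrder.degree_X, MonomialOrder.degree_X]
      exact Finsupp.Lex.single_lt_iff.mpr hfi
    refine ⟨by rw [MonomialOrder.degree_add_eq_right_of_lt hlt, MonomialOrder.degree_X], ?_⟩
    rw [add_comm]
    exact MonomialOrder.monic_X.add_of_lt hlt
  · rw [add_zero, MonomialOrder.degree_X, le_antisymm (hf i) (not_lt.mp hfi)]
    exact ⟨rfl, MonomialOrder.monic_X⟩

theorem lex_degree_aeval_specializationForm_monomial (hf : ∀ i, f i ≤ i) (A : Fin n →₀ ℕ) :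
    MonomialOrder.lex.degree (aeval (specializationForm k f) (monomial A (1 : k))) = A.mapDomain f ∧
    MonomialOrder.lex.Monic (aeval (specializationForm k f) (monomial A (1 : k))) := by
  rw [aeval_monomial, map_one, one_mul, Finsupp.prod]
  have hmonic i : MonomialOrder.lex.Monic (specializationForm k f i ^ A i) :=
    (lex_degree_specializationForm hf i).2.pow
  refine ⟨?_, MonomialOrder.Monic.prod fun i _ => hmonic i⟩
  rw [MonomialOrder.degree_prod_of_regular fun i _ => by
    rw [(hmonic i).leadingCoeff_eq_one]; exact isRegular_one]
  simp only [MonomialOrder.degree_pow, (lex_degree_specializationForm hf _).1,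
    Finsupp.smul_single_one]
  rw [Finsupp.mapDomain, Finsupp.sum]

theorem IsBorelFixed.monomial_mem_of_borelSpec {I : Ideal (MvPolynomial (Fin n) k)}
    (hborel : IsBorelFixed I) (hmon : IsMonomialIdeal I) {A B : Fin n →₀ ℕ}
    (hAB : BorelSpec A B) (hA : monomial A (1 : k) ∈ I) : monomial B (1 : k) ∈ I := by
  obtain ⟨f, hf, rfl⟩ := hAB
  have hfixed := hborel (specializationMatrix k f)
    (by rw [det_specializationMatrix hf]; exact isUnit_one)
    fun i j => specializationMatrix_eq_zero_of_lt hf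
  have hform : (fun i => ∑ j, C (specializationMatrix k f i j) * X j) = specializationForm k f :=
    funext sum_specializationMatrix_mul_X
  rw [hform] at hfixed
  have hφA : aeval (specializationForm k f) (monomial A (1 : k)) ∈ I := by
    rw [← hfixed]
    exact Ideal.mem_map_of_mem _ hA
  obtain ⟨hdeg, hmonic⟩ := lex_degree_aeval_specializationForm_monomial (k := k) hf A
  exact hmon.monomial_mem_of_mem_support hφA
    (hdeg ▸ MonomialOrder.degree_mem_support hmonic.ne_zero)

theorem IsMonomialIdeal.linearIndependent_mk_monomial {I : Ideal (MvPolynomial (Fin n) k)}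
    (hI : IsMonomialIdeal I) {ι : Type*} {D : ι → Fin n →₀ ℕ} (hD : Function.Injective D)
    (hDI : ∀ i, monomial (D i) (1 : k) ∉ I) :
    LinearIndependent k fun i => Ideal.Quotient.mkₐ k I (monomial (D i) (1 : k)) := by
  classical
  rw [linearIndependent_iff']
  intro s g hg i hi
  by_contra hgi
  set p := ∑ j ∈ s, g j • monomial (D j) (1 : k)
  have hp : p ∈ I := by
    rw [← Ideal.Quotient.eq_zero_iff_mem, ← Ideal.Quotient.mkₐ_eq_mk k]
    simpa [p, map_sum] using hg
  have hcoeff : coeff (D i) p = g i := by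
    simp [p, coeff_sum, coeff_monomial, hD.eq_iff, hi]
  exact hDI i (hI.monomial_mem_of_mem_support hp (by rwa [mem_support_iff, hcoeff]))

theorem IsMonomialIdeal.card_le_hilb {I : Ideal (MvPolynomial (Fin n) k)}
    (hI : IsMonomialIdeal I) {ι : Type*} [Fintype ι] {D : ι → Fin n →₀ ℕ}
    (hD : Function.Injective D) {t : ℕ} (hdeg : ∀ i, monDeg (D i) = t)
    (hDI : ∀ i, monomial (D i) (1 : k) ∉ I) : Fintype.card ι ≤ hilb I t := by
  set V := (homogeneousSubmodule (Fin n) k t).map (Ideal.Quotient.mkₐ k I).toLinearMap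
  have : Module.Finite k V :=
    Module.Finite.iff_fg.mpr ((homogeneousSubmodule_fg (σ := Fin n) (R := k) t).map _)
  have hmem i : Ideal.Quotient.mkₐ k I (monomial (D i) (1 : k)) ∈ V :=
    Submodule.mem_map_of_mem (isHomogeneous_monomial _ (hdeg i))
  have hli : LinearIndependent k fun i => (⟨_, hmem i⟩ : V) :=
    .of_comp V.subtype (hI.linearIndependent_mk_monomial hD hDI)
  exact hli.fintype_card_le_finrank

theorem monomial_mem_of_hilb_lt {I : Ideal (MvPolynomial (Fin n) k)} (hmon : IsMonomialIdeal I)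
    (hborel : IsBorelFixed I) {s t : ℕ} (h : hilb I t < (s + t).choose t) (A : Fin n →₀ ℕ)
    (hA : monDeg A = t) (hsupp : ∀ i ∈ A.support, (i : ℕ) < n - s) : monomial A (1 : k) ∈ I := by
  by_contra hAI
  obtain ⟨C, hC, hCA⟩ := exists_injective_borelSpec (s := s) A hA hsupp
  have hcard := hmon.card_le_hilb hC (fun M => (hCA M).1)
    fun M hM => hAI (hborel.monomial_mem_of_borelSpec hmon (hCA M).2 hM)
  rw [Sym.card_sym_eq_multichoose, Fintype.card_fin, Nat.multichoose_eq,
    Nat.add_right_comm, Nat.add_sub_cancel] at hcard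
  exact h.not_ge hcard

end

theorem MvPolynomial.monomial_mem_of_le {σ R : Type*} [CommSemiring R]
    {J : Ideal (MvPolynomial σ R)} {D E : σ →₀ ℕ} (hED : E ≤ D) (hE : monomial E (1 : R) ∈ J) :
    monomial D (1 : R) ∈ J := by
  rw [← tsub_add_cancel_of_le hED, ← mul_one (1 : R), ← monomial_mul]
  exact J.mul_mem_left _ hE

theorem MvPolynomial.mem_of_forall_monomial_mem {σ R : Type*} [CommSemiring R]
    {J : Ideal (MvPolynomial σ R)} {p : MvPolynomial σ R}
    (h : ∀ D ∈ p.support, monomial D (1 : R) ∈ J) : p ∈ J := by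
  rw [← p.support_sum_monomial_coeff]
  refine J.sum_mem fun D hD => ?_
  rw [← mul_one (coeff D p), ← smul_eq_mul, ← smul_monomial]
  exact J.smul_of_tower_mem _ (h D hD)

theorem mem_lastVars_sup_of_isHomogeneous {k : Type*} [Field k] {n s t : ℕ}
    {I : Ideal (MvPolynomial (Fin n) k)}
    (hlow : ∀ A : Fin n →₀ ℕ, monDeg A = t → (∀ i ∈ A.support, (i : ℕ) < n - s) →
      monomial A (1 : k) ∈ I)
    {p : MvPolynomial (Fin n) k} {t' : ℕ} (hp : p.IsHomogeneous t') (ht : t ≤ t') :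
    p ∈ lastVars k n s ⊔ I := by
  refine mem_of_forall_monomial_mem fun D hD => ?_
  by_cases hlast : ∃ i : Fin n, n - s ≤ (i : ℕ) ∧ D i ≠ 0
  · obtain ⟨i, hi, hDi⟩ := hlast
    exact Ideal.mem_sup_left (monomial_mem_of_le (E := Finsupp.single i 1)
      (Finsupp.single_le_iff.mpr (Nat.one_le_iff_ne_zero.mpr hDi)) (Ideal.subset_span ⟨i, hi, rfl⟩))
  · push Not at hlast
    have hdeg : D.degree = t' := by
      by_contra hne
      exact mem_support_iff.mp hD (hp.coeff_eq_zero hne)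
    obtain ⟨E, hED, hE⟩ := D.exists_le_degree_eq t (hdeg ▸ ht)
    refine Ideal.mem_sup_right (monomial_mem_of_le hED (hlow E hE fun i hi => ?_))
    by_contra hni
    exact Finsupp.mem_support_iff.mp hi (Nat.eq_zero_of_le_zero (hlast i (not_lt.mp hni) ▸ hED i))

theorem stmt4_general {k : Type*} [Field k] {n : ℕ} (I : Ideal (MvPolynomial (Fin n) k))
    (hmon : IsMonomialIdeal I) (hborel : IsBorelFixed I)
    (s t : ℕ)
    (h : hilb I t < (s + t).choose t) :
    (∀ A : Fin n →₀ ℕ, monDeg A = t → (∀ i ∈ A.support, (i : ℕ) < n - s) →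
        monomial A (1 : k) ∈ I) ∧
    IsReductionOf (lastVars k n s) I ∧
    redNum (lastVars k n s) I ≤ t - 1 := by
  have hlow := monomial_mem_of_hilb_lt hmon hborel h
  have hred : ∀ t' ≥ t, ∀ p : MvPolynomial (Fin n) k, p.IsHomogeneous t' →
      p ∈ lastVars k n s ⊔ I :=
    fun _ ht' _ hp => mem_lastVars_sup_of_isHomogeneous hlow hp ht'
  exact ⟨hlow, ⟨t, hred⟩, Nat.sInf_le fun t' ht' => hred t' (by omega)⟩

/-- If `I` is Borel-fixed and `dim_k(R/I)_t < C(s+t,t)`, then every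
monomial of degree `t` in `x_1,…,x_{n-s}` lies in `I`; consequently the last `s`
variables generate a reduction of `R/I` with reduction number at most `t-1`. -/
theorem stmt4 {k : Type*} [Field k] {n : ℕ} (I : Ideal (MvPolynomial (Fin n) k))
    (hmon : IsMonomialIdeal I) (hborel : IsBorelFixed I)
    (s t : ℕ) (hs : 1 ≤ s) (ht : 1 ≤ t)
    (h : hilb I t < (s + t).choose t) :
    (∀ A : Fin n →₀ ℕ, monDeg A = t → (∀ i ∈ A.support, (i : ℕ) < n - s) →
        monomial A (1 : k) ∈ I) ∧
    IsReductionOf (lastVars k n s) I ∧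
    redNum (lastVars k n s) I ≤ t - 1 :=
  stmt4_general I hmon hborel s t h
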